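/- arXiv:1004.1262 — 4 statements merged into one kernel-verified Lean document; each statement's English description precedes it below -/
import Mathlib

section
/- Substitution abstraction by variable elimination only weakens guards and drops assignments, hence the abstract substitution simulates the concrete one on the abstract variables: for every substitution S in the guarded-command language and every variable set X, if Prd S s s' (the concrete before-after relation holds), then there exists a state t' agreeing with s' on all variables in X such that Prd (TS X S) s t', where TS X replaces assignments to variables outside X by skip, weakens guards by TX, and acts recursively on choice and anyVar. -/
inductive CF (V D : Type) : Type where
  | atom (vars : Set V) (p : (V → D) → Prop)
      (h : ∀ s t : V → D, (∀ v ∈ vars, s v = t v) → (p s ↔ p t)) : CF V D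
  | conj (P₁ P₂ : CF V D) : CF V D
  | disj (P₁ P₂ : CF V D) : CF V D

def eval {V D : Type} : CF V D → (V → D) → Prop
  | .atom _ p _, s => p s
  | .conj P₁ P₂, s => eval P₁ s ∧ eval P₂ s
  | .disj P₁ P₂, s => eval P₁ s ∨ eval P₂ s

open Classical in
noncomputable def TX {V D : Type} (X : Set V) : CF V D → CF V D
  | .atom vars p h => if vars ⊆ X then .atom vars p h
      else .atom ∅ (fun _ => True) (fun _ _ _ => Iff.rfl)
  | .conj P₁ P₂ => .conj (TX X P₁) (TX X P₂)
  | .disj P₁ P₂ => .disj (TX X P₁) (TX X P₂)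

inductive SubstV (V D : Type) : Type where
  | assignVar (x : V) (E : (V → D) → D) : SubstV V D
  | skip : SubstV V D
  | guard (P : CF V D) (S : SubstV V D) : SubstV V D
  | choice (S₁ S₂ : SubstV V D) : SubstV V D
  | anyVar (S : D → SubstV V D) : SubstV V D

def Prd {V D : Type} [DecidableEq V] : SubstV V D → (V → D) → (V → D) → Prop
  | .assignVar x E, s, s' => s' = Function.update s x (E s)
  | .skip, s, s' => s' = s
  | .guard P S, s, s' => eval P s ∧ Prd S s s'
  | .choice S₁ S₂, s, s' => Prd S₁ s s' ∨ Prd S₂ s s'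
  | .anyVar S, s, s' => ∃ d, Prd (S d) s s'

open Classical in
noncomputable def TS {V D : Type} (X : Set V) : SubstV V D → SubstV V D
  | .assignVar x E => if x ∈ X then .assignVar x E else .skip
  | .skip => .skip
  | .guard P S => .guard (TX X P) (TS X S)
  | .choice S₁ S₂ => .choice (TS X S₁) (TS X S₂)
  | .anyVar S => .anyVar (fun d => TS X (S d))

def DFClosed {V D : Type} (X : Set V) : SubstV V D → Prop
  | .assignVar x E => x ∈ X → ∀ s t : V → D, (∀ v ∈ X, s v = t v) → E s = E t
  | .skip => True
  | .guard _ S => DFClosed X S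
  | .choice S₁ S₂ => DFClosed X S₁ ∧ DFClosed X S₂
  | .anyVar S => ∀ d, DFClosed X (S d)

/-! Abstraction only weakens guards (`TX` replaces the atoms that read outside `X` by `True`)
and turns assignments to variables outside `X` into `skip`. Running the abstract substitution
from the same initial state `s`, the kept assignments compute exactly the concrete values, and
a dropped assignment to `x ∉ X` leaves every variable of `X` unchanged, so the two final states
agree on `X`. -/

section

variable {V D : Type}

theorem eval_TX_of_eval (X : Set V) {P : CF V D} {s : V → D} (h : eval P s) :
    eval (TX X P) s := by
  induction P with
  | atom =>
    simp only [TX]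
    split <;> simp_all [eval]
  | conj P₁ P₂ ih₁ ih₂ => exact ⟨ih₁ h.1, ih₂ h.2⟩
  | disj P₁ P₂ ih₁ ih₂ => exact h.imp ih₁ ih₂

variable [DecidableEq V]

theorem exists_prd_TS_eqOn (X : Set V) {S : SubstV V D} {s s' : V → D} (h : Prd S s s') :
    ∃ t', Set.EqOn t' s' X ∧ Prd (TS X S) s t' := by
  induction S generalizing s' with
  | assignVar x E =>
    by_cases hx : x ∈ X
    · exact ⟨s', Set.eqOn_refl _ _, by simpa [TS, hx, Prd] using h⟩
    · refine ⟨s, fun v hv => ?_, by simp [TS, hx, Prd]⟩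
      rw [h, Function.update_of_ne (ne_of_mem_of_not_mem hv hx)]
  | skip => exact ⟨s, h ▸ Set.eqOn_refl _ _, rfl⟩
  | guard P S ih =>
    obtain ⟨t', ht, hpt⟩ := ih h.2
    exact ⟨t', ht, eval_TX_of_eval X h.1, hpt⟩
  | choice S₁ S₂ ih₁ ih₂ =>
    rcases h with h | h
    · obtain ⟨t', ht, hpt⟩ := ih₁ h
      exact ⟨t', ht, Or.inl hpt⟩
    · obtain ⟨t', ht, hpt⟩ := ih₂ h
      exact ⟨t', ht, Or.inr hpt⟩
  | anyVar S ih =>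
    obtain ⟨d, hd⟩ := h
    obtain ⟨t', ht, hpt⟩ := ih d hd
    exact ⟨t', ht, d, hpt⟩

end

theorem stmt11 {V D : Type} [DecidableEq V] (X : Set V) :
    ∀ (S : SubstV V D), DFClosed X S →
      ∀ s s', Prd S s s' →
        ∃ t', (∀ v ∈ X, t' v = s' v) ∧ Prd (TS X S) s t' := by
  intro S _ s s' h
  obtain ⟨t', ht, hpt⟩ := exists_prd_TS_eqOn X h
  exact ⟨t', fun _ hv => ht hv, hpt⟩
end

section
/- Abstraction of substitutions preserves totality of the before-after relation: if the concrete substitution S is enabled at state s (there exists s' with Prd S s s'), then the abstraction TS X S is also enabled at s. -/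
theorem evalTX {V D : Type} (X : Set V) (P : CF V D) (s : V → D) (h : eval P s) :
    eval (TX X P) s := by
  induction P with
  | atom vars p hp =>
      simp only [TX]; split <;> simp [eval] at h ⊢ <;> exact h
  | conj P₁ P₂ ih₁ ih₂ => exact ⟨ih₁ h.1, ih₂ h.2⟩
  | disj P₁ P₂ ih₁ ih₂ => exact h.elim (fun h => Or.inl (ih₁ h)) (fun h => Or.inr (ih₂ h))

theorem stmt12 {V D : Type} [DecidableEq V] (X : Set V) :
    ∀ (S : SubstV V D) (s : V → D), (∃ s', Prd S s s') → ∃ t', Prd (TS X S) s t' := by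
  intro S
  induction S with
  | assignVar x E =>
      intro s _
      simp only [TS]; split
      · exact ⟨_, rfl⟩
      · exact ⟨s, rfl⟩
  | skip => intro s _; exact ⟨s, rfl⟩
  | guard P S ih =>
      rintro s ⟨s', hP, hS⟩
      obtain ⟨t', ht⟩ := ih s ⟨s', hS⟩
      exact ⟨t', evalTX X P s hP, ht⟩
  | choice S₁ S₂ ih₁ ih₂ =>
      rintro s ⟨s', h | h⟩
      · obtain ⟨t', ht⟩ := ih₁ s ⟨s', h⟩; exact ⟨t', Or.inl ht⟩
      · obtain ⟨t', ht⟩ := ih₂ s ⟨s', h⟩; exact ⟨t', Or.inr ht⟩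
  | anyVar S ih =>
      rintro s ⟨s', d, h⟩
      obtain ⟨t', ht⟩ := ih d s ⟨s', h⟩
      exact ⟨t', d, ht⟩
end

section
/- (Theorem 1, relational form) The abstraction is a refinement-abstraction in the B sense: for all states s, s', if Prd S s s' then Prd (TS X S) s|X s'|X, where s|X denotes the restriction of a state to the variables of X (states of the abstract system are functions on X), given that X is closed under data-flow dependency (every expression assigned to a variable of X and every kept guard atom depends only on variables of X). -/
def restrict {V D : Type} (X : Set V) (s : V → D) : {v // v ∈ X} → D :=
  fun v => s v.1


lemma restrict_eq_iff {V D : Type} (X : Set V) (s t : V → D) :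
    restrict X t = restrict X s ↔ ∀ v ∈ X, t v = s v := by
  constructor
  · intro h v hv; exact congrFun h ⟨v, hv⟩
  · intro h; funext v; exact h v.1 v.2

lemma eval_TX {V D : Type} (X : Set V) (P : CF V D) (s t : V → D)
    (ht : ∀ v ∈ X, t v = s v) (h : eval P s) : eval (TX X P) t := by
  induction P with
  | atom vars p hp =>
    by_cases hv : vars ⊆ X
    · simp only [TX, if_pos hv, eval]
      exact (hp t s (fun v hvv => ht v (hv hvv))).mpr h
    · simp only [TX, if_neg hv, eval]
  | conj P₁ P₂ ih₁ ih₂ => exact ⟨ih₁ h.1, ih₂ h.2⟩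
  | disj P₁ P₂ ih₁ ih₂ => exact h.imp ih₁ ih₂

theorem stmt13 {V D : Type} [DecidableEq V] (X : Set V) (S : SubstV V D)
    (hDF : DFClosed X S) :
    ∀ s s' t : V → D, Prd S s s' → restrict X t = restrict X s →
      ∃ t', restrict X t' = restrict X s' ∧ Prd (TS X S) t t' := by
  induction S with
  | assignVar x E =>
    intro s s' t hP ht
    rw [restrict_eq_iff] at ht
    by_cases hx : x ∈ X
    · refine ⟨Function.update t x (E t), ?_, ?_⟩
      · rw [restrict_eq_iff]
        intro v hv
        subst hP
        by_cases hvx : v = x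
        · subst hvx
          simp [Function.update_self, hDF hx t s ht]
        · simp [Function.update_of_ne hvx, ht v hv]
      · simp [TS, if_pos hx, Prd]
    · refine ⟨t, ?_, ?_⟩
      · rw [restrict_eq_iff]
        intro v hv
        subst hP
        have hvx : v ≠ x := fun h => hx (h ▸ hv)
        simp [Function.update_of_ne hvx, ht v hv]
      · simp [TS, if_neg hx, Prd]
  | skip =>
    intro s s' t hP ht
    exact ⟨t, hP ▸ ht, rfl⟩
  | guard P S ih =>
    intro s s' t hP ht
    obtain ⟨t', h1, h2⟩ := ih hDF s s' t hP.2 ht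
    rw [restrict_eq_iff] at ht
    exact ⟨t', h1, eval_TX X P s t ht hP.1, h2⟩
  | choice S₁ S₂ ih₁ ih₂ =>
    intro s s' t hP ht
    rcases hP with h | h
    · obtain ⟨t', h1, h2⟩ := ih₁ hDF.1 s s' t h ht
      exact ⟨t', h1, Or.inl h2⟩
    · obtain ⟨t', h1, h2⟩ := ih₂ hDF.2 s s' t h ht
      exact ⟨t', h1, Or.inr h2⟩
  | anyVar S ih =>
    intro s s' t hP ht
    obtain ⟨d, hd⟩ := hP
    obtain ⟨t', h1, h2⟩ := ih d (hDF d) s s' t hd ht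
    exact ⟨t', h1, d, h2⟩
end

section
/- Invariant preservation transfers to the abstraction for predicates over abstract variables: if I is a CF predicate all of whose atoms depend only on variables in X, and the concrete substitution S preserves I in the relational sense (∀ s s', eval I s → Prd S s s' → eval I s'), and X is closed under data-flow and control-flow dependency of S (guards of S unchanged by TX X and assigned expressions to X-variables depend only on X), then the abstract substitution TS X S also preserves I. -/
def GuardAtomsIn {V D : Type} (X : Set V) : CF V D → Prop
  | .atom vars _ _ => vars ⊆ X
  | .conj P₁ P₂ => GuardAtomsIn X P₁ ∧ GuardAtomsIn X P₂
  | .disj P₁ P₂ => GuardAtomsIn X P₁ ∧ GuardAtomsIn X P₂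

def CFClosed {V D : Type} (X : Set V) : SubstV V D → Prop
  | .assignVar _ _ => True
  | .skip => True
  | .guard P S => GuardAtomsIn X P ∧ CFClosed X S
  | .choice S₁ S₂ => CFClosed X S₁ ∧ CFClosed X S₂
  | .anyVar S => ∀ d, CFClosed X (S d)

lemma TX_eq_of_guardAtomsIn {V D : Type} (X : Set V) (P : CF V D)
    (h : GuardAtomsIn X P) : TX X P = P := by
  induction P with
  | atom vars p hp => exact if_pos (h : vars ⊆ X)
  | conj P₁ P₂ ih₁ ih₂ => simp [TX, ih₁ h.1, ih₂ h.2]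
  | disj P₁ P₂ ih₁ ih₂ => simp [TX, ih₁ h.1, ih₂ h.2]

lemma eval_agree {V D : Type} (X : Set V) (I : CF V D) (hI : GuardAtomsIn X I)
    (s t : V → D) (hst : ∀ v ∈ X, s v = t v) : eval I s ↔ eval I t := by
  induction I with
  | atom vars p hp => exact hp s t (fun v hv => hst v (hI hv))
  | conj P₁ P₂ ih₁ ih₂ => exact and_congr (ih₁ hI.1) (ih₂ hI.2)
  | disj P₁ P₂ ih₁ ih₂ => exact or_congr (ih₁ hI.1) (ih₂ hI.2)

lemma TS_sim {V D : Type} [DecidableEq V] (X : Set V) (S : SubstV V D)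
    (hCF : CFClosed X S) (s t' : V → D) (h : Prd (TS X S) s t') :
    ∃ s', Prd S s s' ∧ ∀ v ∈ X, s' v = t' v := by
  induction S generalizing t' with
  | assignVar x E =>
    by_cases hx : x ∈ X
    · simp only [TS, if_pos hx] at h
      exact ⟨t', h, fun v _ => rfl⟩
    · simp only [TS, if_neg hx, Prd] at h
      refine ⟨Function.update s x (E s), rfl, fun v hv => ?_⟩
      rw [h, Function.update_of_ne (fun he : v = x => hx (he ▸ hv))]
  | skip => exact ⟨t', h, fun v _ => rfl⟩
  | guard P S ih =>
    obtain ⟨hP, hS⟩ := h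
    rw [TX_eq_of_guardAtomsIn X P hCF.1] at hP
    obtain ⟨s', hs', hag⟩ := ih hCF.2 t' hS
    exact ⟨s', ⟨hP, hs'⟩, hag⟩
  | choice S₁ S₂ ih₁ ih₂ =>
    rcases h with h | h
    · obtain ⟨s', hs', hag⟩ := ih₁ hCF.1 t' h
      exact ⟨s', Or.inl hs', hag⟩
    · obtain ⟨s', hs', hag⟩ := ih₂ hCF.2 t' h
      exact ⟨s', Or.inr hs', hag⟩
  | anyVar S ih =>
    obtain ⟨d, hd⟩ := h
    obtain ⟨s', hs', hag⟩ := ih d (hCF d) t' hd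
    exact ⟨s', ⟨d, hs'⟩, hag⟩

theorem stmt15 {V D : Type} [DecidableEq V] (X : Set V) (S : SubstV V D) (I : CF V D)
    (hI : GuardAtomsIn X I)
    (hpres : ∀ s s', eval I s → Prd S s s' → eval I s')
    (hDF : DFClosed X S) (hCF : CFClosed X S) :
    ∀ s t', eval I s → Prd (TS X S) s t' → eval I t' := by
  intro s t' hs h
  obtain ⟨s', hs', hag⟩ := TS_sim X S hCF s t' h
  exact (eval_agree X I hI s' t' hag).mp (hpres s s' hs hs')
end
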